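/- With V, U, D as above, the sequence of polynomials (P_n) representing an endomorphism φ of V as φ = Σ_n P_n(U) ∘ D^n (pointwise) is unique: if (P_n) and (Q_n) are sequences in R[x] with Σ_{k=0}^{m} P_k(U)(e_{m−k}) = Σ_{k=0}^{m} Q_k(U)(e_{m−k}) for all m ∈ ℕ, then P_n = Q_n for all n. -/

import Mathlib

/-!
The system of equations is triangular: once `P k = Q k` is known for `k < m`, the `m`-th equation
reduces to `P_m(U)(e₀) = Q_m(U)(e₀)`, and the coordinates of `P(U)(e₀)` are the coefficients of `P`.
-/

noncomputable def e (R : Type*) [CommRing R] (n : ℕ) : ℕ →₀ R := Finsupp.single n 1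

noncomputable def U (R : Type*) [CommRing R] : Module.End R (ℕ →₀ R) :=
  Finsupp.lmapDomain R R (· + 1)

open Finset Polynomial

theorem eq_of_forall_sum_range_eq {α M : Type*} [AddCancelCommMonoid M] (v : α → ℕ → M)
    (hv : Function.Injective fun x ↦ v x 0) (P Q : ℕ → α)
    (h : ∀ m, ∑ k ∈ range (m + 1), v (P k) (m - k) = ∑ k ∈ range (m + 1), v (Q k) (m - k)) :
    P = Q := by
  funext n
  induction n using Nat.strong_induction_on with
  | _ n ih =>
    have hn := h n
    rw [sum_range_succ, sum_range_succ, sum_congr rfl fun k hk ↦ by rw [ih k (mem_range.1 hk)],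
      Nat.sub_self] at hn
    exact hv (add_left_cancel hn)

theorem U_pow_apply_e (R : Type*) [CommRing R] (m n : ℕ) : (U R ^ m) (e R n) = e R (n + m) := by
  induction m with
  | zero => rfl
  | succ m ih =>
    rw [pow_succ', Module.End.mul_apply, ih]
    exact Finsupp.mapDomain_single

theorem aeval_U_apply_e_zero (R : Type*) [CommRing R] (p : R[X]) (n : ℕ) :
    aeval (U R) p (e R 0) n = p.coeff n := by
  induction p using Polynomial.induction_on' with
  | add p q hp hq => simp [hp, hq]
  | monomial k a =>
    rw [aeval_monomial, Module.End.mul_apply, U_pow_apply_e, zero_add, Module.algebraMap_end_apply]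
    simp [e, coeff_monomial, Finsupp.single_apply]

theorem aeval_U_apply_e_zero_injective (R : Type*) [CommRing R] :
    Function.Injective fun p : R[X] ↦ aeval (U R) p (e R 0) := fun p q hpq ↦
  Polynomial.ext fun n ↦ by
    rw [← aeval_U_apply_e_zero, ← aeval_U_apply_e_zero]
    exact DFunLike.congr_fun hpq n

/-- Uniqueness of the decomposition `φ = Σ_n P_n(U) ∘ Dⁿ`: if two sequences of
polynomials give the same values `Σ_{k=0}^{m} P_k(U)(e_{m−k})` on all basis vectors,
they are equal. -/
theorem endo_decomposition_unique (R : Type*) [CommRing R]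
    (P Q : ℕ → Polynomial R)
    (h : ∀ m : ℕ,
      ∑ k ∈ Finset.range (m + 1), (Polynomial.aeval (U R) (P k)) (e R (m - k)) =
      ∑ k ∈ Finset.range (m + 1), (Polynomial.aeval (U R) (Q k)) (e R (m - k))) :
    ∀ n, P n = Q n :=
  congrFun <| eq_of_forall_sum_range_eq (fun p j ↦ aeval (U R) p (e R j))
    (aeval_U_apply_e_zero_injective R) P Q h
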